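/- arXiv:2207.09969 — 3 statements merged into one kernel-verified Lean document; each statement's English description precedes it below -/
import Mathlib

section
/- The function f(y) = ½ y² + y l + (y/β) log((1 - e^{-βy})/(1 - e^{-βT})), extended by f(0) = 0, is strictly convex on [0, T] for any l ∈ ℝ, β > 0, T > 0. -/
/-!
With `u = β y`, and up to a linear term, the objective is `β⁻² φ(β y)` where
`φ u = u² / 2 + u log (1 - e⁻ᵘ)`, so it suffices that `φ` is strictly convex on `[0, ∞)`.
For `u > 0`, with `E = e⁻ᵘ`, `φ'' u = (1 - E² - u E) / (1 - E)²`, and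
`1 - E² - u E = E (eᵘ - u - E) > 0` because `eᵘ - u ≥ 1 > E`.
At `0`, `φ` is continuous since `u log (1 - e⁻ᵘ)` lies between `u log u - u²` and `u log u`.
-/

open Real Set Filter Topology

theorem StrictConvexOn.comp_linearMap {𝕜 E F β : Type*} [Semiring 𝕜] [PartialOrder 𝕜]
    [AddCommMonoid E] [AddCommMonoid F] [AddCommMonoid β] [PartialOrder β] [Module 𝕜 E]
    [Module 𝕜 F] [SMul 𝕜 β] {f : F → β} {s : Set F}
    (hf : StrictConvexOn 𝕜 s f) {g : E →ₗ[𝕜] F} (hg : Function.Injective g) :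
    StrictConvexOn 𝕜 (g ⁻¹' s) (f ∘ g) :=
  ⟨hf.1.linear_preimage g, fun x hx y hy hxy a b ha hb hab => by
    simpa only [Function.comp_apply, map_add, map_smul] using
      hf.2 hx hy (hg.ne hxy) ha hb hab⟩

theorem StrictConvexOn.smul {𝕜 E β : Type*} [CommSemiring 𝕜] [PartialOrder 𝕜]
    [AddCommMonoid E] [AddCommMonoid β] [PartialOrder β] [SMul 𝕜 E] [Module 𝕜 β]
    [PosSMulStrictMono 𝕜 β] {f : E → β} {s : Set E} {c : 𝕜} (hc : 0 < c)
    (hf : StrictConvexOn 𝕜 s f) : StrictConvexOn 𝕜 s fun x => c • f x :=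
  ⟨hf.1, fun x hx y hy hxy a b ha hb hab =>
    calc
      c • f (a • x + b • y) < c • (a • f x + b • f y) :=
        smul_lt_smul_of_pos_left (hf.2 hx hy hxy ha hb hab) hc
      _ = a • c • f x + b • c • f y := by rw [smul_add, smul_comm c, smul_comm c]⟩

theorem strictConvexOn_of_hasDerivAt2_pos {D : Set ℝ} (hD : Convex ℝ D) {f f' f'' : ℝ → ℝ}
    (hf : ContinuousOn f D) (hf' : ∀ x ∈ interior D, HasDerivAt f (f' x) x)
    (hf'' : ∀ x ∈ interior D, HasDerivAt f' (f'' x) x)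
    (hf''₀ : ∀ x ∈ interior D, 0 < f'' x) : StrictConvexOn ℝ D f := by
  refine strictConvexOn_of_deriv2_pos hD hf fun x hx => ?_
  have hderiv : deriv f =ᶠ[𝓝 x] f' :=
    Filter.eventually_of_mem (isOpen_interior.mem_nhds hx) fun y hy => (hf' y hy).deriv
  rw [Function.iterate_succ_apply', Function.iterate_one, hderiv.deriv_eq, (hf'' x hx).deriv]
  exact hf''₀ x hx

namespace Real

theorem one_sub_exp_neg_pos {u : ℝ} (hu : 0 < u) : 0 < 1 - exp (-u) := by
  linarith [exp_lt_one_iff.mpr (neg_neg_of_pos hu)]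

theorem hasDerivAt_one_sub_exp_neg (u : ℝ) :
    HasDerivAt (fun v => 1 - exp (-v)) (exp (-u)) u := by
  simpa using ((hasDerivAt_neg u).exp).const_sub 1

theorem one_sub_exp_neg_sq_sub_mul_exp_neg_pos {u : ℝ} (hu : 0 < u) :
    0 < 1 - exp (-u) ^ 2 - u * exp (-u) := by
  have hinv : exp u * exp (-u) = 1 := by rw [← exp_add, add_neg_cancel, exp_zero]
  have hlt : exp (-u) < 1 := exp_lt_one_iff.mpr (neg_neg_of_pos hu)
  nlinarith [add_one_le_exp u, exp_pos (-u)]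

theorem log_one_sub_exp_neg_le {u : ℝ} (hu : 0 < u) : log (1 - exp (-u)) ≤ log u :=
  log_le_log (one_sub_exp_neg_pos hu) (by linarith [add_one_le_exp (-u)])

theorem log_sub_le_log_one_sub_exp_neg {u : ℝ} (hu : 0 < u) :
    log u - u ≤ log (1 - exp (-u)) := by
  have hmul : u * exp (-u) ≤ 1 - exp (-u) := by
    have h := mul_le_mul_of_nonneg_right (add_one_le_exp u) (exp_pos (-u)).le
    rw [← exp_add, add_neg_cancel, exp_zero] at h
    linarith
  calc log u - u = log (u * exp (-u)) := by rw [log_mul hu.ne' (exp_pos _).ne', log_exp]; ring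
    _ ≤ log (1 - exp (-u)) := log_le_log (by positivity) hmul

theorem tendsto_mul_log_one_sub_exp_neg_nhdsGT_zero :
    Tendsto (fun u => u * log (1 - exp (-u))) (𝓝[>] 0) (𝓝 0) := by
  have hlim : ∀ g : ℝ → ℝ, Continuous g → g 0 = 0 → Tendsto g (𝓝[>] 0) (𝓝 0) :=
    fun g hg hg0 => (hg.tendsto' 0 0 hg0).mono_left nhdsWithin_le_nhds
  refine tendsto_of_tendsto_of_tendsto_of_le_of_le'
    (hlim (fun u => u * log u - u ^ 2) (by fun_prop) (by simp))
    (hlim (fun u => u * log u) continuous_mul_log (by simp)) ?_ ?_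
  all_goals filter_upwards [self_mem_nhdsWithin] with u (hu : 0 < u)
  · nlinarith [log_sub_le_log_one_sub_exp_neg hu]
  · nlinarith [log_one_sub_exp_neg_le hu]

end Real

-- At `u = 0` the junk value `log 0 = 0` makes the formula vanish, so no case split is needed.
noncomputable def logitProfile (u : ℝ) : ℝ := u ^ 2 / 2 + u * log (1 - exp (-u))

theorem logitProfile_zero : logitProfile 0 = 0 := by simp [logitProfile]

theorem continuousOn_logitProfile : ContinuousOn logitProfile (Ici 0) := by
  intro u hu
  rcases (mem_Ici.mp hu).eq_or_lt with rfl | hu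
  · refine continuousWithinAt_Ioi_iff_Ici.mp ?_
    have hsq : Tendsto (fun u : ℝ => u ^ 2 / 2) (𝓝[>] 0) (𝓝 0) :=
      ((continuous_pow 2).div_const 2).continuousWithinAt.tendsto.trans (by simp)
    have hsum := hsq.add tendsto_mul_log_one_sub_exp_neg_nhdsGT_zero
    rw [add_zero] at hsum
    rwa [ContinuousWithinAt, logitProfile_zero]
  · have h := (one_sub_exp_neg_pos hu).ne'
    unfold logitProfile
    fun_prop (disch := exact h)

theorem hasDerivAt_logitProfile {u : ℝ} (hu : 0 < u) :
    HasDerivAt logitProfile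
      (u + log (1 - exp (-u)) + u * exp (-u) / (1 - exp (-u))) u := by
  have h := (hasDerivAt_one_sub_exp_neg u).log (one_sub_exp_neg_pos hu).ne'
  refine (((hasDerivAt_pow 2 u).div_const 2).add ((hasDerivAt_id' u).mul h)).congr_deriv ?_
  norm_num
  ring

theorem hasDerivAt_logitProfile_deriv {u : ℝ} (hu : 0 < u) :
    HasDerivAt (fun v => v + log (1 - exp (-v)) + v * exp (-v) / (1 - exp (-v)))
      ((1 - exp (-u) ^ 2 - u * exp (-u)) / (1 - exp (-u)) ^ 2) u := by
  have hne := (one_sub_exp_neg_pos hu).ne'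
  have hexp : HasDerivAt (fun v => exp (-v)) (-exp (-u)) u := by
    simpa using (hasDerivAt_neg u).exp
  refine (((hasDerivAt_id' u).add ((hasDerivAt_one_sub_exp_neg u).log hne)).add
    (((hasDerivAt_id' u).mul hexp).div (hasDerivAt_one_sub_exp_neg u) hne)).congr_deriv ?_
  simp only [Pi.mul_apply]
  field_simp
  ring

theorem strictConvexOn_logitProfile : StrictConvexOn ℝ (Ici 0) logitProfile := by
  refine strictConvexOn_of_hasDerivAt2_pos (convex_Ici 0) continuousOn_logitProfile
    (fun u hu => hasDerivAt_logitProfile (by rwa [interior_Ici] at hu))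
    (fun u hu => hasDerivAt_logitProfile_deriv (by rwa [interior_Ici] at hu))
    fun u hu => ?_
  rw [interior_Ici] at hu
  have := one_sub_exp_neg_pos hu
  have := one_sub_exp_neg_sq_sub_mul_exp_neg_pos hu
  positivity

/-- The function `f(y) = ½ y² + y l + (y/β) log((1-e^{-βy})/(1-e^{-βT}))`,
extended by `f 0 = 0`, is strictly convex on `[0, T]`. -/
theorem logit_lineplan_objective_strictConvexOn
    (l β T : ℝ) (hβ : 0 < β) (hT : 0 < T) :
    StrictConvexOn ℝ (Set.Icc (0 : ℝ) T)
      (fun y : ℝ => if y = 0 then 0 else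
        (1 / 2) * y ^ 2 + y * l +
          (y / β) * Real.log ((1 - Real.exp (-β * y)) / (1 - Real.exp (-β * T)))) := by
  have hprofile : StrictConvexOn ℝ (Icc 0 T) fun y => (β ^ 2)⁻¹ • logitProfile (β * y) :=
    ((strictConvexOn_logitProfile.comp_linearMap (g := LinearMap.mul ℝ ℝ β)
      (mul_right_injective₀ hβ.ne')).smul (by positivity)).subset
      (fun y hy => mul_nonneg hβ.le hy.1) (convex_Icc 0 T)
  have hlinear := (LinearMap.mul ℝ ℝ (l - log (1 - exp (-(β * T))) / β)).convexOn
    (convex_Icc 0 T)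
  refine (hprofile.add_convexOn hlinear).congr fun y hy => ?_
  rcases hy.1.eq_or_lt with rfl | hy
  · simp [logitProfile_zero]
  · have hnum := one_sub_exp_neg_pos (mul_pos hβ hy)
    have hden := one_sub_exp_neg_pos (mul_pos hβ hT)
    simp only [Pi.add_apply, LinearMap.mul_apply', smul_eq_mul, logitProfile, if_neg hy.ne',
      neg_mul, log_div hnum.ne' hden.ne']
    field_simp
    ring
end

section
/- The derivative f'(y) = τ(y) + y/(1 - e^{-βy}), where τ(y) = l + (1/β) log((1-e^{-βy})/(1-e^{-βT})), is strictly increasing on (0,∞), tends to -∞ as y → 0+, and tends to +∞ as y → ∞; hence f' is a bijection from (0,∞) to ℝ. -/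
open Real Set Filter Topology

/-!
`τ` is strictly increasing, and `y / (1 - e^{-βy})` is nondecreasing because
`(1 - e^{-βy}) / (βy)` is the slope of the convex function `exp` on `[-βy, 0]`; hence `f'` is
strictly increasing. As `y → 0⁺` the second term stays bounded while `τ → -∞` like a logarithm;
for `y ≥ 1`, `f'(y) ≥ τ(1) + y`. A continuous strictly increasing function with these limits is a
bijection from `(0, ∞)` onto `ℝ` by the intermediate value theorem.
-/
theorem bijOn_Ioi_univ_of_strictMonoOn {α δ : Type*} [ConditionallyCompleteLinearOrder α]
    [TopologicalSpace α] [OrderTopology α] [DenselyOrdered α] [NoMaxOrder α]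
    [LinearOrder δ] [TopologicalSpace δ] [OrderClosedTopology δ] {f : α → δ} {a : α}
    (hmono : StrictMonoOn f (Ioi a)) (hcont : ContinuousOn f (Ioi a))
    (hbot : Tendsto f (𝓝[>] a) atBot) (htop : Tendsto f atTop atTop) :
    BijOn f (Ioi a) univ :=
  ⟨mapsTo_univ _ _, hmono.injOn, hcont.surjOn_of_tendsto nonempty_Ioi
    (tendsto_comp_coe_Ioi_atBot (.of_dense a) |>.2 hbot) (tendsto_comp_val_Ioi_atTop.2 htop)⟩

variable {β c : ℝ}

theorem one_sub_exp_neg_mul_pos (hβ : 0 < β) {y : ℝ} (hy : 0 < y) : 0 < 1 - exp (-β * y) := by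
  rw [sub_pos, exp_lt_one_iff]
  nlinarith

theorem monotoneOn_div_one_sub_exp_neg_mul (hβ : 0 < β) :
    MonotoneOn (fun y => y / (1 - exp (-β * y))) (Ioi 0) := by
  intro y₁ (hy₁ : 0 < y₁) y₂ (hy₂ : 0 < y₂) hy
  have hslope := convexOn_exp.secant_mono (a := 0) (x := -(β * y₂)) (y := -(β * y₁)) trivial
    trivial trivial (by nlinarith) (by nlinarith) (by nlinarith)
  simp only [exp_zero, sub_zero, div_neg, neg_le_neg_iff] at hslope
  rw [div_le_div_iff₀ (by positivity) (by positivity)] at hslope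
  dsimp only
  rw [div_le_div_iff₀ (one_sub_exp_neg_mul_pos hβ hy₁) (one_sub_exp_neg_mul_pos hβ hy₂)]
  simp only [neg_mul]
  nlinarith

theorem strictMonoOn_log_one_sub_exp_neg_mul (l : ℝ) (hβ : 0 < β) (hc : 0 < c) :
    StrictMonoOn (fun y => l + 1 / β * log ((1 - exp (-β * y)) / c)) (Ioi 0) := by
  intro y₁ (hy₁ : 0 < y₁) y₂ _ hy
  have := one_sub_exp_neg_mul_pos hβ hy₁
  have : exp (-β * y₂) < exp (-β * y₁) := exp_lt_exp.2 (by nlinarith)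
  dsimp only
  gcongr

theorem tendsto_log_one_sub_exp_neg_mul_nhdsGT_zero (l : ℝ) (hβ : 0 < β) (hc : 0 < c) :
    Tendsto (fun y => l + 1 / β * log ((1 - exp (-β * y)) / c)) (𝓝[>] 0) atBot := by
  have hcont : ContinuousWithinAt (fun y => (1 - exp (-β * y)) / c) (Ioi 0) 0 := by
    fun_prop
  have hmaps : MapsTo (fun y => (1 - exp (-β * y)) / c) (Ioi 0) (Ioi 0) :=
    fun y hy => div_pos (one_sub_exp_neg_mul_pos hβ hy) hc
  have h := hcont.tendsto_nhdsWithin hmaps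
  simp only [mul_zero, exp_zero, sub_self, zero_div] at h
  exact tendsto_atBot_add_const_left _ l
    ((tendsto_log_nhdsGT_zero.comp h).const_mul_atBot (one_div_pos.2 hβ))

theorem continuousOn_log_one_sub_exp_neg_mul_add_div (l : ℝ) (hβ : 0 < β) (hc : 0 < c) :
    ContinuousOn (fun y => l + 1 / β * log ((1 - exp (-β * y)) / c) + y / (1 - exp (-β * y)))
      (Ioi 0) := by
  intro y hy
  have hs := (one_sub_exp_neg_mul_pos hβ hy).ne'
  have hq : (1 - exp (-β * y)) / c ≠ 0 := div_ne_zero hs hc.ne'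
  exact ContinuousAt.continuousWithinAt (by fun_prop (disch := assumption))

theorem strictMonoOn_log_one_sub_exp_neg_mul_add_div (l : ℝ) (hβ : 0 < β) (hc : 0 < c) :
    StrictMonoOn (fun y => l + 1 / β * log ((1 - exp (-β * y)) / c) + y / (1 - exp (-β * y)))
      (Ioi 0) :=
  (strictMonoOn_log_one_sub_exp_neg_mul l hβ hc).add_monotone
    (monotoneOn_div_one_sub_exp_neg_mul hβ)

theorem tendsto_log_one_sub_exp_neg_mul_add_div_nhdsGT_zero (l : ℝ) (hβ : 0 < β) (hc : 0 < c) :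
    Tendsto (fun y => l + 1 / β * log ((1 - exp (-β * y)) / c) + y / (1 - exp (-β * y)))
      (𝓝[>] 0) atBot := by
  refine tendsto_atBot_mono' _ ?_ (tendsto_atBot_add_const_right _ (1 / (1 - exp (-β * 1)))
    (tendsto_log_one_sub_exp_neg_mul_nhdsGT_zero l hβ hc))
  filter_upwards [Ioc_mem_nhdsGT one_pos] with y ⟨hy₀, hy₁⟩
  gcongr _ + ?_
  exact monotoneOn_div_one_sub_exp_neg_mul hβ hy₀ (mem_Ioi.2 one_pos) hy₁

theorem tendsto_log_one_sub_exp_neg_mul_add_div_atTop (l : ℝ) (hβ : 0 < β) (hc : 0 < c) :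
    Tendsto (fun y => l + 1 / β * log ((1 - exp (-β * y)) / c) + y / (1 - exp (-β * y)))
      atTop atTop := by
  set τ := fun y => l + 1 / β * log ((1 - exp (-β * y)) / c)
  refine tendsto_atTop_mono' _ ?_ (tendsto_atTop_add_const_left _ (τ 1) tendsto_id)
  filter_upwards [eventually_ge_atTop 1] with y hy
  have hy₀ : 0 < y := one_pos.trans_le hy
  have hs := one_sub_exp_neg_mul_pos hβ hy₀
  gcongr
  · exact (strictMonoOn_log_one_sub_exp_neg_mul l hβ hc).monotoneOn (mem_Ioi.2 one_pos) hy₀ hy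
  · exact le_div_self hy₀.le hs (by linarith [exp_pos (-β * y)])

/-- The derivative `f'(y) = τ(y) + y/(1-e^{-βy})` is strictly increasing on
`(0,∞)`, tends to `-∞` as `y → 0⁺` and to `+∞` as `y → ∞`; hence it is a
bijection from `(0,∞)` onto `ℝ`. -/
theorem fderiv_strictMono_and_bijective
    (l β T : ℝ) (hβ : 0 < β) (hT : 0 < T) :
    let τ : ℝ → ℝ := fun y =>
      l + (1 / β) * Real.log ((1 - Real.exp (-β * y)) / (1 - Real.exp (-β * T)))
    let f' : ℝ → ℝ := fun y => τ y + y / (1 - Real.exp (-β * y))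
    StrictMonoOn f' (Set.Ioi 0) ∧
    Tendsto f' (nhdsWithin 0 (Set.Ioi 0)) atBot ∧
    Tendsto f' atTop atTop ∧
    Set.BijOn f' (Set.Ioi 0) Set.univ := by
  intro τ f'
  have hc := one_sub_exp_neg_mul_pos hβ hT
  have hmono : StrictMonoOn f' (Ioi 0) := strictMonoOn_log_one_sub_exp_neg_mul_add_div l hβ hc
  have hbot : Tendsto f' (𝓝[>] 0) atBot :=
    tendsto_log_one_sub_exp_neg_mul_add_div_nhdsGT_zero l hβ hc
  have htop : Tendsto f' atTop atTop := tendsto_log_one_sub_exp_neg_mul_add_div_atTop l hβ hc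
  exact ⟨hmono, hbot, htop, bijOn_Ioi_univ_of_strictMonoOn hmono
    (continuousOn_log_one_sub_exp_neg_mul_add_div l hβ hc) hbot htop⟩
end

section
/- If f'_i(y_i) = f'_j(y_j) with y_i, y_j > 0, where f'_k(y) = τ_k(y) + y/(1 - e^{-βy}) and τ_k(y) = l_k + (1/β) log((1-e^{-βy})/(1-e^{-βT})), then τ_i(y_i) + y_i > τ_j(y_j). -/
open Real

/-- If the derivatives `f'_i(y_i) = f'_j(y_j)` agree at positive points, then
`τ_i(y_i) + y_i > τ_j(y_j)`. -/
theorem tau_plus_y_gt_tau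
    (β T li lj yi yj : ℝ) (hβ : 0 < β) (hT : 0 < T)
    (hyi : 0 < yi) (hyj : 0 < yj)
    (τ : ℝ → ℝ → ℝ)
    (hτ : ∀ l y, τ l y =
      l + (1 / β) * Real.log ((1 - Real.exp (-β * y)) / (1 - Real.exp (-β * T))))
    (heq : τ li yi + yi / (1 - Real.exp (-β * yi)) =
           τ lj yj + yj / (1 - Real.exp (-β * yj))) :
    τ lj yj < τ li yi + yi := by
  have hei : Real.exp (-β * yi) < 1 := by
    apply Real.exp_lt_one_iff.mpr; nlinarith
  have hej : Real.exp (-β * yj) < 1 := by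
    apply Real.exp_lt_one_iff.mpr; nlinarith
  have hdi : (0:ℝ) < 1 - Real.exp (-β * yi) := by linarith
  have hdj : (0:ℝ) < 1 - Real.exp (-β * yj) := by linarith
  -- key inequality 1: 1 + β*yi < exp (β*yi)
  have h1 : β * yi + 1 < Real.exp (β * yi) :=
    Real.add_one_lt_exp (ne_of_gt (mul_pos hβ hyi))
  -- key inequality 2: 1 - exp(-β*yj) < β*yj
  have h2' : (-(β * yj)) + 1 < Real.exp (-(β * yj)) :=
    Real.add_one_lt_exp (ne_of_lt (neg_neg_iff_pos.mpr (mul_pos hβ hyj)))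
  have h2 : 1 - Real.exp (-β * yj) < β * yj := by
    have : -β * yj = -(β * yj) := by ring
    rw [this]; linarith
  -- exp(β*yi) * exp(-β*yi) = 1
  have hmul : Real.exp (β * yi) * Real.exp (-β * yi) = 1 := by
    rw [← Real.exp_add]; ring_nf; exact Real.exp_zero
  have hpos : (0:ℝ) < Real.exp (-β * yi) := Real.exp_pos _
  -- β * yi * exp(-β*yi) < 1 - exp(-β*yi)
  have hkey : β * yi * Real.exp (-β * yi) < 1 - Real.exp (-β * yi) := by
    nlinarith
  have hA : yi / (1 - Real.exp (-β * yi)) - yi < 1 / β := by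
    rw [sub_lt_iff_lt_add, div_lt_iff₀ hdi]
    have hβ' : (0:ℝ) < 1 / β := by positivity
    have hc : 1 / β * β = 1 := one_div_mul_cancel hβ.ne'
    nlinarith [mul_lt_mul_of_pos_left hkey hβ']
  have hB : 1 / β < yj / (1 - Real.exp (-β * yj)) := by
    rw [div_lt_div_iff₀ hβ hdj]
    nlinarith
  linarith
end
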